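/- arXiv:2002.02355 — 6 statements merged into one kernel-verified Lean document; each statement's English description precedes it below -/
import Mathlib

section
/- Let K be a differential field of characteristic zero and K(t) a differential extension with t transcendental over K and t′ ∈ K. If f ∈ K(t) is t-proper (the degree in t of its numerator is strictly less than that of its denominator), then f′ is also t-proper. -/
open Polynomial
open scoped Differential

/-! With `t′ = c ∈ K`, differentiation on `K[t]` is induced by the derivation
`D p = p^δ + c · dp/dX` of `K[X]` (coefficientwise derivative plus `c` times the formal
derivative), and `D` does not raise degrees because `c` is a constant polynomial.
The quotient rule gives `(p/q)′ = (D p · q − p · D q) / q²`, and the numerator has degree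
`< 2 deg q` as soon as `deg p < deg q`. -/

def Derivation.ofAddLeibniz {A : Type*} [CommRing A] (δ : A → A)
    (hadd : ∀ a b, δ (a + b) = δ a + δ b) (hmul : ∀ a b, δ (a * b) = δ a * b + a * δ b) :
    Derivation ℤ A A :=
  Derivation.mk' (AddMonoidHom.mk' δ hadd).toIntLinearMap fun a b => by
    simp only [AddMonoidHom.coe_toIntLinearMap, AddMonoidHom.mk'_apply, hmul, smul_eq_mul]
    ring

def Derivation.restrict {A S : Type*} [CommRing A] [SetLike S A] [SubringClass S A]
    (D : Derivation ℤ A A) (s : S) (hs : ∀ a ∈ s, D a ∈ s) :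
    Derivation ℤ s s :=
  Derivation.mk' ((AddMonoidHom.mk' (fun a : s => (⟨D a, hs a a.2⟩ : s))
    fun a b => Subtype.ext (D.map_add a b)).toIntLinearMap) fun a b =>
    Subtype.ext (D.leibniz (a : A) b)

namespace Differential

variable {A : Type*} [CommRing A] [Differential A]

theorem degree_mapCoeffs_le (p : A[X]) : (mapCoeffs p).degree ≤ p.degree := by
  rw [degree_le_iff_coeff_zero]
  intro n hn
  rw [coeff_mapCoeffs, coeff_eq_zero_of_degree_lt hn, map_zero]

theorem degree_implicitDeriv_C_le (c : A) (p : A[X]) :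
    (implicitDeriv (C c) p).degree ≤ p.degree := by
  refine (degree_add_le _ _).trans (max_le (degree_mapCoeffs_le p) ?_)
  calc (C c * derivative p).degree = (c • derivative p).degree := by rw [smul_eq_C_mul]
    _ ≤ (derivative p).degree := degree_smul_le ..
    _ ≤ p.degree := degree_derivative_le

theorem deriv_aeval_div_aeval {R : Type*} [Field R] [Differential R] [Algebra A R]
    [DifferentialAlgebra A R] (x : R) (v : A[X]) (hx : x′ = aeval x v) (p q : A[X]) :
    (aeval x p / aeval x q)′ =
      aeval x (implicitDeriv v p * q - p * implicitDeriv v q) / aeval x (q * q) := by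
  rw [Derivation.leibniz_div, deriv_aeval_eq_implicitDeriv x v hx,
    deriv_aeval_eq_implicitDeriv x v hx]
  simp only [map_sub, map_mul, smul_eq_mul]
  ring

end Differential

theorem Polynomial.degree_mul_sub_mul_lt {R : Type*} [Ring R] [NoZeroDivisors R]
    {p q p' q' : R[X]} (hp' : p'.degree ≤ p.degree) (hq' : q'.degree ≤ q.degree)
    (hpq : p.degree < q.degree) : (p' * q - p * q').degree < (q * q).degree := by
  have hq : q.degree ≠ ⊥ := (bot_le.trans_lt hpq).ne'
  rw [degree_mul]
  refine (degree_sub_le _ _).trans_lt (max_lt ?_ ?_)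
  · calc (p' * q).degree ≤ p'.degree + q.degree := degree_mul_le _ _
      _ < q.degree + q.degree := WithBot.add_lt_add_right hq (hp'.trans_lt hpq)
  · calc (p * q').degree ≤ p.degree + q.degree :=
          (degree_mul_le _ _).trans (add_le_add_right hq' _)
      _ < q.degree + q.degree := WithBot.add_lt_add_right hq hpq

theorem derivative_of_proper_is_proper_general (F : Type*) [Field F]
    (δ : F → F)
    (hδadd : ∀ a b : F, δ (a + b) = δ a + δ b)
    (hδmul : ∀ a b : F, δ (a * b) = δ a * b + a * δ b)
    (K : Subfield F) (hK : ∀ a ∈ K, δ a ∈ K)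
    (t : F) (ht : δ t ∈ K)
    (f : F)
    (hf : ∃ p q : Polynomial ↥K, q ≠ 0 ∧ p.degree < q.degree ∧
      f = Polynomial.aeval t p / Polynomial.aeval t q) :
    ∃ p₁ q₁ : Polynomial ↥K, q₁ ≠ 0 ∧ p₁.degree < q₁.degree ∧
      δ f = Polynomial.aeval t p₁ / Polynomial.aeval t q₁ := by
  obtain ⟨p, q, hq, hpq, rfl⟩ := hf
  let : Differential F := ⟨.ofAddLeibniz δ hδadd hδmul⟩
  let : Differential K := ⟨Differential.deriv.restrict K hK⟩
  have : DifferentialAlgebra K F := ⟨fun _ => rfl⟩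
  let D := Differential.implicitDeriv (C (⟨δ t, ht⟩ : K))
  refine ⟨D p * q - p * D q, q * q, mul_ne_zero hq hq,
    degree_mul_sub_mul_lt (Differential.degree_implicitDeriv_C_le _ p)
      (Differential.degree_implicitDeriv_C_le _ q) hpq, ?_⟩
  exact Differential.deriv_aeval_div_aeval t _ (by rw [aeval_C]; rfl) p q

/-- Let `K` be a differential field of characteristic zero inside a differential
field extension with `t` transcendental over `K` and `t′ ∈ K`.  If `f ∈ K(t)`
is `t`-proper (it can be written as `p(t)/q(t)` with `deg p < deg q`), then
`f′` is also `t`-proper. -/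
theorem derivative_of_proper_is_proper (F : Type*) [Field F] [CharZero F]
    (δ : F → F)
    (hδadd : ∀ a b : F, δ (a + b) = δ a + δ b)
    (hδmul : ∀ a b : F, δ (a * b) = δ a * b + a * δ b)
    (K : Subfield F) (hK : ∀ a ∈ K, δ a ∈ K)
    (t : F) (htr : Transcendental ↥K t) (ht : δ t ∈ K)
    (f : F)
    (hf : ∃ p q : Polynomial ↥K, q ≠ 0 ∧ p.degree < q.degree ∧
      f = Polynomial.aeval t p / Polynomial.aeval t q) :
    ∃ p₁ q₁ : Polynomial ↥K, q₁ ≠ 0 ∧ p₁.degree < q₁.degree ∧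
      δ f = Polynomial.aeval t p₁ / Polynomial.aeval t q₁ :=
  derivative_of_proper_is_proper_general F δ hδadd hδmul K hK t ht f hf
end

section
/- Let K be a differential field of characteristic zero and t transcendental and primitive over K with C_{K(t)} = C_K. Then t′ ∉ K′ (the derivative t′ is not the derivative of any element of K). Conversely, if t is primitive over K (t′ ∈ K, t transcendental over K) and t′ ∉ K′, then C_{K(t)} = C_K. -/
open Polynomial

/-- The formal derivative-like operator on polynomials induced by a map `d` on
coefficients and the derivative `τ` of the generator. -/
noncomputable def Dpoly {k : Type*} [Field k] (d : k → k) (τ : k) (p : k[X]) : k[X] :=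
  (p.sum fun n a => C (d a) * X ^ n) + C τ * derivative p

lemma Dpoly_coeff {k : Type*} [Field k] (d : k → k) (hd0 : d 0 = 0) (τ : k) (p : k[X]) (i : ℕ) :
    (Dpoly d τ p).coeff i = d (p.coeff i) + τ * (p.coeff (i + 1) * (i + 1)) := by
  unfold Dpoly
  rw [coeff_add, coeff_C_mul, coeff_derivative]
  congr 1
  rw [Polynomial.sum_def, finset_sum_coeff]
  simp only [coeff_C_mul, coeff_X_pow, mul_ite, mul_one, mul_zero]
  rw [Finset.sum_ite_eq p.support i fun n => d (p.coeff n)]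
  by_cases h : i ∈ p.support
  · rw [if_pos h]
  · rw [if_neg h, notMem_support_iff.mp h, hd0]

lemma Dpoly_add {k : Type*} [Field k] (d : k → k) (hd0 : d 0 = 0)
    (hdadd : ∀ a b, d (a + b) = d a + d b) (τ : k) (p q : k[X]) :
    Dpoly d τ (p + q) = Dpoly d τ p + Dpoly d τ q := by
  ext i
  simp only [Dpoly_coeff d hd0, coeff_add, hdadd]
  ring

lemma Dpoly_one {k : Type*} [Field k] (d : k → k) (hd0 : d 0 = 0) (hd1 : d 1 = 0) (τ : k) :
    Dpoly d τ (1 : k[X]) = 0 := by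
  ext i
  rw [Dpoly_coeff d hd0]
  rcases Nat.eq_zero_or_pos i with hi | hi
  · simp [hi, hd1, coeff_one]
  · have h1 : (1 : k[X]).coeff i = 0 := by
      rw [coeff_one, if_neg (by omega)]
    have h2 : (1 : k[X]).coeff (i + 1) = 0 := by
      rw [coeff_one, if_neg (by omega)]
    simp [h1, h2, hd0]

lemma Dpoly_degree_lt {k : Type*} [Field k] (d : k → k) (hd0 : d 0 = 0) (hd1 : d 1 = 0) (τ : k)
    (p : k[X]) (hp : p.Monic) (hdeg : 1 ≤ p.natDegree) :
    (Dpoly d τ p).degree < p.degree := by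
  rw [degree_eq_natDegree hp.ne_zero, degree_lt_iff_coeff_zero]
  intro m hm
  have hm' : p.natDegree ≤ m := by exact_mod_cast hm
  rw [Dpoly_coeff d hd0]
  have h2 : p.coeff (m + 1) = 0 :=
    coeff_eq_zero_of_natDegree_lt (by omega)
  rcases eq_or_lt_of_le hm' with he | hl
  · subst he
    rw [hp.coeff_natDegree, hd1, h2]
    ring
  · rw [coeff_eq_zero_of_natDegree_lt hl, hd0, h2]
    ring
open Polynomial

section Delta
variable {F : Type*} [Field F] (δ : F → F)
    (hδadd : ∀ a b : F, δ (a + b) = δ a + δ b)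
    (hδmul : ∀ a b : F, δ (a * b) = δ a * b + a * δ b)

include hδadd in
lemma delta_zero : δ 0 = 0 := by
  have h := hδadd 0 0
  rw [add_zero] at h
  exact (left_eq_add.mp h)

include hδmul in
lemma delta_one : δ 1 = 0 := by
  have h := hδmul 1 1
  simp only [mul_one, one_mul] at h
  exact (left_eq_add.mp h)

include hδadd in
lemma delta_neg (a : F) : δ (-a) = -δ a := by
  have h := hδadd a (-a)
  rw [add_neg_cancel, delta_zero δ hδadd] at h
  exact (eq_neg_of_add_eq_zero_right h.symm)

include hδadd in
lemma delta_sub (a b : F) : δ (a - b) = δ a - δ b := by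
  rw [sub_eq_add_neg, hδadd, delta_neg δ hδadd, sub_eq_add_neg]

include hδadd hδmul in
lemma delta_natCast (n : ℕ) : δ (n : F) = 0 := by
  induction n with
  | zero => exact_mod_cast delta_zero δ hδadd
  | succ m ih =>
    push_cast
    rw [hδadd, ih, delta_one δ hδmul, add_zero]

include hδmul in
lemma delta_pow (x : F) (n : ℕ) : δ (x ^ (n + 1)) = (n + 1) * x ^ n * δ x := by
  induction n with
  | zero => simp
  | succ m ih =>
    have hx : x ^ (m + 2) = x * x ^ (m + 1) := by ring
    rw [hx, hδmul, ih]
    push_cast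
    ring

include hδmul in
lemma delta_inv_of_eq_zero (x : F) (hx : δ x = 0) : δ x⁻¹ = 0 := by
  by_cases h : x = 0
  · have h0 : δ (0 : F) = 0 := by
      have := hδmul 0 0
      simpa using this
    rw [h, inv_zero]
    exact h0
  · have h1 := hδmul x x⁻¹
    rw [mul_inv_cancel₀ h, delta_one δ hδmul, hx, zero_mul, zero_add] at h1
    exact (mul_eq_zero.mp h1.symm).resolve_left h

end Delta

lemma aeval_Dpoly {F : Type*} [Field F] (δ : F → F)
    (hδadd : ∀ a b : F, δ (a + b) = δ a + δ b)
    (hδmul : ∀ a b : F, δ (a * b) = δ a * b + a * δ b)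
    (K : Subfield F) (d : ↥K → ↥K) (hd : ∀ a : ↥K, (d a : F) = δ ↑a)
    (t : F) (τ : ↥K) (hτ : (τ : F) = δ t) (p : Polynomial ↥K) :
    δ (aeval t p) = aeval t (Dpoly d τ p) := by
  have hd0 : d 0 = 0 := by
    ext
    rw [hd]
    push_cast
    exact delta_zero δ hδadd
  have hdadd : ∀ a b : ↥K, d (a + b) = d a + d b := by
    intro a b
    ext
    push_cast [hd]
    exact hδadd _ _
  induction p using Polynomial.induction_on' with
  | add p q hp hq =>
    rw [map_add, hδadd, hp, hq, Dpoly_add d hd0 hdadd, map_add]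
  | monomial n a =>
    have hD : Dpoly d τ (monomial n a) =
        C (d a) * X ^ n + C τ * monomial (n - 1) (a * n) := by
      unfold Dpoly
      rw [Polynomial.sum_monomial_index _ _ (by rw [hd0, map_zero, zero_mul]),
        derivative_monomial]
    rw [hD, map_add, map_mul, map_mul, aeval_C, aeval_C, map_pow, aeval_X,
      aeval_monomial, aeval_monomial]
    show δ ((a : F) * t ^ n) = (d a : F) * t ^ n + (τ : F) * (((a * (n : ↥K)) : F) * t ^ (n - 1))
    rw [hd, hτ]
    cases n with
    | zero => push_cast; simp [hδmul, delta_one δ hδmul]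
    | succ m =>
      rw [hδmul, delta_pow δ hδmul]
      push_cast
      ring

/-- Let `K` be a differential field of characteristic zero and `F = K(t)` a
differential field extension with `t` transcendental over `K` and `t′ ∈ K`.
Then the constants of `K(t)` coincide with the constants of `K` (i.e. every
constant of `K(t)` already lies in `K`) if and only if `t′` is not the
derivative of any element of `K`. -/
theorem primitive_generator_iff_not_derivative (F : Type*) [Field F] [CharZero F]
    (δ : F → F)
    (hδadd : ∀ a b : F, δ (a + b) = δ a + δ b)
    (hδmul : ∀ a b : F, δ (a * b) = δ a * b + a * δ b)
    (K : Subfield F) (hK : ∀ a ∈ K, δ a ∈ K)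
    (t : F) (htr : Transcendental ↥K t) (ht : δ t ∈ K)
    (hgen : Subfield.closure ((K : Set F) ∪ {t}) = ⊤) :
    (∀ c : F, δ c = 0 → c ∈ K) ↔ ¬ ∃ g ∈ K, δ g = δ t := by
  classical
  constructor
  · -- forward: constants in K → t' not a derivative from K
    rintro hconst ⟨g, hgK, hgt⟩
    have h0 : δ (t - g) = 0 := by rw [delta_sub δ hδadd, hgt, sub_self]
    have htg : t - g ∈ K := hconst _ h0
    have htK : t ∈ K := by
      have := add_mem htg hgK
      simpa using this
    refine htr ⟨X - C ⟨t, htK⟩, X_sub_C_ne_zero _, ?_⟩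
    rw [map_sub, aeval_X, aeval_C, sub_eq_zero]
    rfl
  · -- converse
    intro hng c hc
    -- the induced derivation on K and τ = δ t
    set d : ↥K → ↥K := fun a => ⟨δ ↑a, hK _ a.2⟩ with hd_def
    have hd : ∀ a : ↥K, (d a : F) = δ ↑a := fun a => rfl
    set τ : ↥K := ⟨δ t, ht⟩ with hτ_def
    have hτ : (τ : F) = δ t := rfl
    have hd0 : d 0 = 0 := by
      ext; rw [hd]; push_cast; exact delta_zero δ hδadd
    have hd1 : d 1 = 0 := by
      ext; rw [hd]; push_cast; exact delta_one δ hδmul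
    have heval : ∀ P : Polynomial ↥K, aeval t P = 0 → P = 0 := transcendental_iff.mp htr
    -- c is a ratio of polynomials in t
    have hmem : c ∈ IntermediateField.adjoin ↥K {t} := by
      have h1 : Subfield.closure ((K : Set F) ∪ {t}) ≤
          (IntermediateField.adjoin ↥K {t}).toSubfield := by
        apply Subfield.closure_le.mpr
        rintro x (hx | hx)
        · exact (IntermediateField.adjoin ↥K {t}).algebraMap_mem ⟨x, hx⟩
        · exact IntermediateField.subset_adjoin _ _ hx
      exact h1 (hgen ▸ Subfield.mem_top c)
    rw [IntermediateField.mem_adjoin_simple_iff] at hmem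
    obtain ⟨r, s, hrs⟩ := hmem
    by_cases hs : s = 0
    · rw [hs, map_zero, div_zero] at hrs
      rw [hrs]; exact zero_mem K
    letI : DecidableEq (Polynomial ↥K) := Classical.decEq _
    letI : GCDMonoid (Polynomial ↥K) := EuclideanDomain.gcdMonoid _
    -- reduce to coprime numerator/denominator with monic denominator
    set g0 : Polynomial ↥K := GCDMonoid.gcd r s with hg0
    have hg0ne : g0 ≠ 0 := gcd_ne_zero_of_right hs
    set r₀ : Polynomial ↥K := r / g0 with hr₀
    set s₀ : Polynomial ↥K := s / g0 with hs₀
    have hrr : g0 * r₀ = r := EuclideanDomain.mul_div_cancel' hg0ne (gcd_dvd_left r s)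
    have hss : g0 * s₀ = s := EuclideanDomain.mul_div_cancel' hg0ne (gcd_dvd_right r s)
    have hcop : IsCoprime r₀ s₀ := isCoprime_div_gcd_div_gcd hs
    have hs₀ne : s₀ ≠ 0 := right_div_gcd_ne_zero hs
    set u : ↥K := s₀.leadingCoeff with hu_def
    have hu : u ≠ 0 := leadingCoeff_ne_zero.mpr hs₀ne
    set r₁ : Polynomial ↥K := r₀ * C u⁻¹ with hr₁
    set s₁ : Polynomial ↥K := s₀ * C u⁻¹ with hs₁
    have hmon : s₁.Monic := monic_mul_leadingCoeff_inv hs₀ne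
    have hs₁ne : s₁ ≠ 0 := hmon.ne_zero
    have hCu : C u * C u⁻¹ = (1 : Polynomial ↥K) := by
      rw [← C_mul, mul_inv_cancel₀ hu, C_1]
    have hcop₁ : IsCoprime r₁ s₁ := by
      obtain ⟨a, b, hab⟩ := hcop
      refine ⟨a * C u, b * C u, ?_⟩
      calc a * C u * r₁ + b * C u * s₁
          = (a * r₀ + b * s₀) * (C u * C u⁻¹) := by rw [hr₁, hs₁]; ring
        _ = 1 := by rw [hab, hCu, one_mul]
    clear_value g0 r₀ s₀ u r₁ s₁
    -- c = r₁(t)/s₁(t)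
    have hg0t : aeval t g0 ≠ 0 := fun h => hg0ne (heval _ h)
    have hs₁t : aeval t s₁ ≠ 0 := fun h => hs₁ne (heval _ h)
    have hCut : aeval t (C u⁻¹) ≠ 0 := by
      rw [aeval_C]
      exact fun h => inv_ne_zero hu (Subtype.ext h)
    have hc1 : c = aeval t r₁ / aeval t s₁ := by
      rw [hr₁, hs₁, map_mul, map_mul, mul_div_mul_right _ _ hCut, hrs, ← hrr, ← hss,
        map_mul, map_mul, mul_div_mul_left _ _ hg0t]
    -- the fundamental polynomial identity
    have hcs : c * aeval t s₁ = aeval t r₁ := by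
      rw [hc1, div_mul_cancel₀ _ hs₁t]
    have hder := congrArg δ hcs
    rw [hδmul, hc, zero_mul, zero_add,
      aeval_Dpoly δ hδadd hδmul K d hd t τ hτ s₁,
      aeval_Dpoly δ hδadd hδmul K d hd t τ hτ r₁] at hder
    have hFeq : aeval t r₁ * aeval t (Dpoly d τ s₁)
        = aeval t (Dpoly d τ r₁) * aeval t s₁ := by
      calc aeval t r₁ * aeval t (Dpoly d τ s₁)
          = (c * aeval t s₁) * aeval t (Dpoly d τ s₁) := by rw [hcs]
        _ = (c * aeval t (Dpoly d τ s₁)) * aeval t s₁ := by ring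
        _ = aeval t (Dpoly d τ r₁) * aeval t s₁ := by rw [hder]
    have hpoly : r₁ * Dpoly d τ s₁ = Dpoly d τ r₁ * s₁ := by
      have h0 : r₁ * Dpoly d τ s₁ - Dpoly d τ r₁ * s₁ = 0 := by
        apply heval
        rw [map_sub, map_mul, map_mul, hFeq, sub_self]
      exact sub_eq_zero.mp h0
    have hdvd : s₁ ∣ Dpoly d τ s₁ := by
      apply hcop₁.symm.dvd_of_dvd_mul_right
      rw [mul_comm, hpoly]
      exact dvd_mul_left _ _
    -- key: a polynomial killed by D of positive degree yields a contradiction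
    have hkeyco : ∀ p : Polynomial ↥K, Dpoly d τ p = 0 → 1 ≤ p.natDegree → False := by
      intro p hDp hdeg
      apply hng
      have hp0 : p ≠ 0 := fun h => by simp [h] at hdeg
      set n := p.natDegree with hn
      have hco : ∀ i, (d (p.coeff i) : F) + (τ : F) * ((p.coeff (i + 1) : F) * (i + 1)) = 0 := by
        intro i
        have h := congrArg (fun q => ((Polynomial.coeff q i : ↥K) : F)) hDp
        simp only [Dpoly_coeff d hd0, coeff_zero] at h
        push_cast at h
        exact h
      have htop := hco n
      rw [coeff_eq_zero_of_natDegree_lt (by omega : p.natDegree < n + 1)] at htop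
      push_cast at htop
      rw [zero_mul, mul_zero, add_zero] at htop
      -- htop : δ (leading coeff) = 0
      have hδα : δ ((p.coeff n : F)) = 0 := htop
      have hsub := hco (n - 1)
      rw [Nat.sub_add_cancel hdeg] at hsub
      set α : F := (p.coeff n : F) with hα
      set β : F := (p.coeff (n - 1) : F) with hβ
      have hαne : α ≠ 0 := by
        intro h
        apply hp0
        apply leadingCoeff_eq_zero.mp
        rw [leadingCoeff, ← hn]
        exact Subtype.ext h
      have hnne : ((n : F)) ≠ 0 := Nat.cast_ne_zero.mpr (by omega)
      have hcast : (((n - 1 : ℕ) : F) + 1) = (n : F) := by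
        have h' : (n - 1 + 1 : ℕ) = n := Nat.sub_add_cancel hdeg
        calc ((n - 1 : ℕ) : F) + 1 = ((n - 1 + 1 : ℕ) : F) := by push_cast; ring
          _ = (n : F) := by rw [h']
      have hsub' : δ β + δ t * (α * (n : F)) = 0 := by
        rw [← hcast]
        exact hsub
      refine ⟨-(β / ((n : F) * α)), ?_, ?_⟩
      · exact neg_mem (div_mem (SetLike.coe_mem _) (mul_mem (by exact_mod_cast natCast_mem K n)
          (SetLike.coe_mem _)))
      · have hna : δ ((n : F) * α) = 0 := by
          rw [hδmul, delta_natCast δ hδadd hδmul, zero_mul, hδα, mul_zero, add_zero]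
        have hinv : δ (((n : F) * α)⁻¹) = 0 := delta_inv_of_eq_zero δ hδmul _ hna
        have hβval : δ β = -(δ t * (α * (n : F))) := eq_neg_of_add_eq_zero_left hsub'
        have hne : (n : F) * α ≠ 0 := mul_ne_zero hnne hαne
        rw [div_eq_mul_inv, delta_neg δ hδadd, hδmul, hinv, mul_zero, add_zero, hβval, neg_mul, neg_neg,
          show δ t * (α * (n : F)) * (((n : F)) * α)⁻¹
              = δ t * ((((n : F)) * α) * (((n : F)) * α)⁻¹) from by ring,
          mul_inv_cancel₀ hne, mul_one]
    -- conclude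
    by_cases hdeg : 1 ≤ s₁.natDegree
    · exact absurd (eq_zero_of_dvd_of_degree_lt hdvd
        (Dpoly_degree_lt d hd0 hd1 τ s₁ hmon hdeg)) (fun h => hkeyco s₁ h hdeg)
    · have hs₁one : s₁ = 1 := hmon.natDegree_eq_zero.mp (by omega)
      have hDr₁ : Dpoly d τ r₁ = 0 := by
        have := hpoly
        rw [hs₁one, Dpoly_one d hd0 hd1, mul_zero, mul_one] at this
        exact this.symm
      by_cases hdeg' : 1 ≤ r₁.natDegree
      · exact absurd hDr₁ (fun h => hkeyco r₁ h hdeg')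
      · have hr₁C : r₁ = C (r₁.coeff 0) := eq_C_of_natDegree_eq_zero (by omega)
        rw [hc1, hs₁one, map_one, div_one, hr₁C, aeval_C]
        exact SetLike.coe_mem _
end

section
/- Let K be a differential field of characteristic zero and t a primitive generator over K. If g ∈ K[t] + K(t)′ is t-simple (t-proper with squarefree denominator), then g = 0. -/
/-!
Write `g = A / B` in lowest terms and pick a monic irreducible factor `d` of `B`; since `B` is
squarefree, `g` has a simple pole at `d`. Write `h = u / (d ^ m * w)` with `d ∤ w`, and `d ∤ u`
if `m > 0`. If `m = 0`, then `h′` has no pole at `d`. If `m > 0`, then `h′` has a pole of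
order `m + 1 ≥ 2` at `d`, because `d ∤ m u w d′`: as `t′ ∈ K`, the polynomial `d′` has smaller
degree than `d`, and it is nonzero since otherwise `d(t)` would be a constant outside `K`.
In both cases `p + h′` cannot have a simple pole at `d`.
-/

open Polynomial Differential IntermediateField
open scoped Differential

def Derivation.ofLeibniz {R : Type*} [CommRing R] (δ : R → R)
    (hadd : ∀ a b, δ (a + b) = δ a + δ b) (hmul : ∀ a b, δ (a * b) = δ a * b + a * δ b) :
    Derivation ℤ R R :=
  Derivation.mk' (AddMonoidHom.mk' δ hadd).toIntLinearMap fun a b => by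
    simp [hmul, add_comm, mul_comm]

theorem pow_succ_mul_sq_mul_deriv_div {F : Type*} [Field F] [Differential F] (u d w : F) (m : ℕ)
    (hd : d ≠ 0) (hw : w ≠ 0) :
    d ^ (m + 1) * w ^ 2 * (u / (d ^ m * w))′ = d * (w * u′ - u * w′) - m * u * w * d′ := by
  rw [Derivation.leibniz_div, Derivation.leibniz, Derivation.leibniz_pow]
  rcases m with _ | m
  · simp only [pow_zero, zero_smul, smul_eq_mul, Nat.cast_zero]
    field_simp
    ring
  · simp only [smul_eq_mul, nsmul_eq_mul, Nat.add_sub_cancel]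
    field_simp
    ring

section ImplicitDeriv

variable {K : Type*} [Field K] [Differential K]

theorem implicitDeriv_C_apply (τ : K) (P : K[X]) :
    implicitDeriv (C τ) P = mapCoeffs P + τ • derivative P := by
  simp [implicitDeriv, smul_eq_C_mul]

theorem Polynomial.Monic.degree_mapCoeffs_lt {P : K[X]} (hP : P.Monic) :
    (mapCoeffs P).degree < P.degree := by
  rw [degree_eq_natDegree hP.ne_zero, degree_lt_iff_coeff_zero]
  intro n hn
  rcases hn.eq_or_lt with rfl | hlt
  · simp [hP.coeff_natDegree]
  · simp [coeff_eq_zero_of_natDegree_lt hlt]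

theorem Polynomial.Monic.degree_implicitDeriv_C_lt {P : K[X]} (hP : P.Monic) (τ : K) :
    (implicitDeriv (C τ) P).degree < P.degree := by
  rw [implicitDeriv_C_apply]
  exact (degree_add_le _ _).trans_lt <| max_lt hP.degree_mapCoeffs_lt <|
    (degree_smul_le _ _).trans_lt (degree_derivative_lt hP.ne_zero)

end ImplicitDeriv

section PrimitiveExtension

variable {K F : Type*} [Field K] [Field F] [Algebra K F] {t : F}

theorem aeval_mul_div_aeval_mul (htr : Transcendental K t) {c a b : K[X]} (hc : c ≠ 0) :
    aeval t (c * a) / aeval t (c * b) = aeval t a / aeval t b := by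
  rw [map_mul, map_mul, mul_div_mul_left _ _ fun h => hc (transcendental_iff.mp htr c h)]

theorem exists_isRelPrime_eq_aeval_div (htr : Transcendental K t) {x : F} (hx : x ∈ K⟮t⟯) :
    ∃ u w : K[X], IsRelPrime u w ∧ w ≠ 0 ∧ x = aeval t u / aeval t w := by
  obtain ⟨r, s, rfl⟩ := (mem_adjoin_simple_iff (F := K) x).mp hx
  by_cases hs : s = 0
  · exact ⟨0, 1, isRelPrime_zero_left.mpr isUnit_one, one_ne_zero, by simp [hs]⟩
  obtain ⟨u, w, c, hcop, rfl, rfl⟩ := UniqueFactorizationMonoid.exists_reduced_factors' r s hs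
  have hc : c ≠ 0 := left_ne_zero_of_mul hs
  exact ⟨u, w, hcop, right_ne_zero_of_mul hs, aeval_mul_div_aeval_mul htr hc⟩

variable [Differential K] [Differential F] [DifferentialAlgebra K F] {τ : K}

theorem Irreducible.not_dvd_implicitDeriv_C [ContainConstants K F] (htr : Transcendental K t)
    (ht : t′ = algebraMap K F τ) {d : K[X]} (hd : Irreducible d) (hm : d.Monic) :
    ¬ d ∣ implicitDeriv (C τ) d := by
  intro hdvd
  have hzero := eq_zero_of_dvd_of_degree_lt hdvd (hm.degree_implicitDeriv_C_lt τ)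
  have hconst : (aeval t d)′ = 0 := by
    rw [deriv_aeval_eq_implicitDeriv t (C τ) (by rwa [aeval_C]) d, hzero, map_zero]
  obtain ⟨c, hc⟩ := mem_range_of_deriv_eq_zero K hconst
  have hdC : d = C c := transcendental_iff_injective.mp htr (by rw [aeval_C, hc])
  exact (degree_pos_of_irreducible hd).not_ge (hdC ▸ degree_C_le)

theorem mul_pow_mul_sq_eq_of_eq_add_deriv (htr : Transcendental K t)
    (ht : t′ = algebraMap K F τ) {A B p u d w : K[X]} {m : ℕ} (hd : d ≠ 0) (hw : w ≠ 0)
    (hB : B ≠ 0)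
    (h : aeval t A / aeval t (d * B) = aeval t p + (aeval t u / aeval t (d ^ m * w))′) :
    A * d ^ m * w ^ 2 = (p * d ^ (m + 1) * w ^ 2 + (d * (w * implicitDeriv (C τ) u -
      u * implicitDeriv (C τ) w) - m * u * w * implicitDeriv (C τ) d)) * B := by
  have hne : ∀ {P : K[X]}, P ≠ 0 → aeval t P ≠ 0 := fun hP h =>
    hP (transcendental_iff.mp htr _ h)
  have hderiv : ∀ P : K[X], (aeval t P)′ = aeval t (implicitDeriv (C τ) P) :=
    deriv_aeval_eq_implicitDeriv t (C τ) (by rwa [aeval_C])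
  have hclear := pow_succ_mul_sq_mul_deriv_div (aeval t u) (aeval t d) (aeval t w) m
    (hne hd) (hne hw)
  simp only [map_mul, map_pow] at h
  rw [hderiv, hderiv, hderiv] at hclear
  apply transcendental_iff_injective.mp htr
  simp only [map_mul, map_pow, map_add, map_sub, map_natCast]
  rw [← hclear, eq_sub_of_add_eq' h.symm]
  field_simp [hne hd, hne hB]
  ring

theorem aeval_div_mul_ne_add_deriv [CharZero K] [ContainConstants K F]
    (htr : Transcendental K t) (ht : t′ = algebraMap K F τ) {A B p u d w : K[X]} {m : ℕ}
    (hd : Irreducible d) (hdm : d.Monic) (hA : ¬ d ∣ A) (hB : ¬ d ∣ B) (hw : ¬ d ∣ w)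
    (hu : m ≠ 0 → ¬ d ∣ u) :
    aeval t A / aeval t (d * B) ≠ aeval t p + (aeval t u / aeval t (d ^ m * w))′ := by
  intro h
  have hdp := hd.prime
  have key := mul_pow_mul_sq_eq_of_eq_add_deriv htr ht hd.ne_zero
    (by rintro rfl; exact hw (dvd_zero d)) (by rintro rfl; exact hB (dvd_zero d)) h
  have hdD := hd.not_dvd_implicitDeriv_C htr ht hdm
  generalize implicitDeriv (C τ) = D at key hdD
  rcases m with _ | k
  · have hdvd : d ∣ A * w ^ 2 := ⟨(p * w ^ 2 + (w * D u - u * D w)) * B, by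
      linear_combination key⟩
    exact hdp.not_dvd_mul hA (fun hdw => hw (hdp.dvd_of_dvd_pow hdw)) hdvd
  · have hdvd : d ∣ (d * (w * D u - u * D w) - ↑(k + 1) * u * w * D d) * B := by
      have hrw : (d * (w * D u - u * D w) - ↑(k + 1) * u * w * D d) * B =
          d * (A * d ^ k * w ^ 2 - p * d ^ (k + 1) * w ^ 2 * B) := by
        linear_combination -key
      exact hrw ▸ dvd_mul_right d _
    have hdvd' : d ∣ ↑(k + 1) * u * w * D d :=
      (dvd_sub_right (dvd_mul_right d _)).mp ((hdp.dvd_or_dvd hdvd).resolve_right hB)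
    have hdk : ¬ d ∣ (↑(k + 1) : K[X]) := by
      rw [← C_eq_natCast]
      exact fun h => hd.not_isUnit (isUnit_of_dvd_unit h
        (isUnit_C.mpr (IsUnit.mk0 _ (Nat.cast_ne_zero.mpr k.succ_ne_zero))))
    exact hdp.not_dvd_mul (hdp.not_dvd_mul (hdp.not_dvd_mul hdk (hu k.succ_ne_zero)) hw) hdD
      hdvd'

theorem eq_zero_of_simple_of_eq_aeval_add_deriv [CharZero K] [ContainConstants K F]
    (htr : Transcendental K t) (ht : t′ = algebraMap K F τ) (hgen : K⟮t⟯ = ⊤)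
    {g : F} (hmem : ∃ (p : K[X]) (h : F), g = aeval t p + h′)
    (hsimple : ∃ p q : K[X], q ≠ 0 ∧ p.degree < q.degree ∧ Squarefree q ∧
      g = aeval t p / aeval t q) :
    g = 0 := by
  obtain ⟨p, h, rfl⟩ := hmem
  obtain ⟨A₀, B₀, hB₀, hdeg₀, hsf₀, hg⟩ := hsimple
  by_contra hg0
  obtain ⟨A, B, G, hcop, rfl, rfl⟩ :=
    UniqueFactorizationMonoid.exists_reduced_factors' A₀ B₀ hB₀
  have hG : G ≠ 0 := left_ne_zero_of_mul hB₀
  rw [aeval_mul_div_aeval_mul htr hG] at hg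
  have hA : A ≠ 0 := by rintro rfl; simp [hg] at hg0
  have hdeg : A.degree < B.degree := by
    rwa [degree_mul, degree_mul, WithBot.add_lt_add_iff_left (degree_ne_bot.mpr hG)] at hdeg₀
  obtain ⟨d, hdm, hd, B₁, rfl⟩ := B.exists_monic_irreducible_factor <|
    not_isUnit_of_degree_pos B ((zero_le_degree_iff.mpr hA).trans_lt hdeg)
  have hdB₁ : ¬ d ∣ B₁ := fun ⟨c, hc⟩ => hd.not_isUnit <|
    hsf₀.of_mul_right d ⟨c, by rw [hc, mul_assoc]⟩
  have hdA : ¬ d ∣ A := fun hdA => hd.not_isUnit (hcop hdA (dvd_mul_right d B₁))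
  have hh : h ∈ K⟮t⟯ := hgen ▸ mem_top
  obtain ⟨u, w₀, hcop', hw₀, rfl⟩ := exists_isRelPrime_eq_aeval_div htr hh
  obtain ⟨m, w, rfl, hdw⟩ : ∃ m w, w₀ = d ^ m * w ∧ ¬ d ∣ w :=
    ⟨_, (finiteMultiplicity_of_degree_pos_of_monic (degree_pos_of_irreducible hd) hdm
      hw₀).exists_eq_pow_mul_and_not_dvd⟩
  have hdu : m ≠ 0 → ¬ d ∣ u := fun hm hdu =>
    hd.not_isUnit (hcop' hdu (dvd_mul_of_dvd_left (dvd_pow_self d hm) w))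
  exact aeval_div_mul_ne_add_deriv htr ht hd hdm hdA hdB₁ hdw hdu hg.symm

end PrimitiveExtension

/-- Let `K` be a differential field of characteristic zero and `t` a primitive
generator over `K`, with `F = K(t)`.  If `g ∈ K[t] + K(t)′` is `t`-simple
(`t`-proper with squarefree denominator), then `g = 0`. -/
theorem simple_in_polynomials_plus_derivatives_is_zero (F : Type*) [Field F] [CharZero F]
    (δ : F → F)
    (hδadd : ∀ a b : F, δ (a + b) = δ a + δ b)
    (hδmul : ∀ a b : F, δ (a * b) = δ a * b + a * δ b)
    (K : Subfield F) (hK : ∀ a ∈ K, δ a ∈ K)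
    (t : F) (htr : Transcendental ↥K t) (ht : δ t ∈ K)
    (hgen : Subfield.closure ((K : Set F) ∪ {t}) = ⊤)
    (hnewconst : ∀ c : F, δ c = 0 → c ∈ K)
    (g : F)
    (hmem : ∃ (p : Polynomial ↥K) (h : F), g = Polynomial.aeval t p + δ h)
    (hsimple : ∃ p q : Polynomial ↥K, q ≠ 0 ∧ p.degree < q.degree ∧ Squarefree q ∧
      g = Polynomial.aeval t p / Polynomial.aeval t q) :
    g = 0 := by
  let : Differential F := ⟨Derivation.ofLeibniz δ hδadd hδmul⟩
  let : Differential K := ⟨Derivation.ofLeibniz (fun a : K => ⟨δ a, hK a a.2⟩)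
    (fun a b => Subtype.ext (hδadd a b)) (fun a b => Subtype.ext (hδmul a b))⟩
  have : DifferentialAlgebra K F := ⟨fun _ => rfl⟩
  have : ContainConstants K F := ⟨fun {x} hx => ⟨⟨x, hnewconst x hx⟩, rfl⟩⟩
  have : CharZero K := (RingHom.charZero_iff (algebraMap K F).injective).mpr inferInstance
  have hadjoin : K⟮t⟯ = ⊤ := toSubfield_injective <| by
    rw [adjoin_toSubfield, top_toSubfield, ← hgen]
    exact congrArg (Subfield.closure <| · ∪ {t}) Subtype.range_coe
  exact eq_zero_of_simple_of_eq_aeval_add_deriv htr (τ := ⟨δ t, ht⟩) rfl hadjoin hmem hsimple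
end

section
/- Let K be a differential field of characteristic zero and t a primitive generator over K. Every logarithmic derivative f ∈ K(t) can be written as f = g + h, where g ∈ K(t) is a t-simple logarithmic derivative sum of the form Σᵢ mᵢ pᵢ′/pᵢ with mᵢ ∈ ℤ and pᵢ ∈ K[t] monic irreducible, and h ∈ K is a logarithmic derivative in K. -/
/-!
Write `u = p(t)/q(t)` with `p, q ∈ K[t]` and factor `p` and `q` into a leading coefficient times
monic irreducibles. Since the logarithmic derivative turns products into sums,
`u′/u = Σ m_r r(t)′/r(t) + c′/c` where `c ∈ K` is the quotient of the leading coefficients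
and `m_r ∈ ℤ` is the difference of multiplicities. Because `t′ ∈ K`, the derivative of `r(t)` is
`(κ r + t′ r')(t)`, where `κ` differentiates the coefficients; for monic `r` this has degree
less than `deg r`. Hence the sum over the distinct `r` is a proper fraction with squarefree
denominator `∏ r`.
-/

open Polynomial UniqueFactorizationMonoid Differential Finset
open scoped Differential

namespace Derivation

def ofAddLeibniz_s11 {R : Type*} [CommRing R] (δ : R → R) (hadd : ∀ a b, δ (a + b) = δ a + δ b)
    (hmul : ∀ a b, δ (a * b) = δ a * b + a * δ b) : Derivation ℤ R R :=
  Derivation.mk' (AddMonoidHom.mk' δ hadd).toIntLinearMap fun a b => by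
    simp only [AddMonoidHom.coe_toIntLinearMap, AddMonoidHom.mk'_apply, hmul, smul_eq_mul]
    ring

def restrictSubfield {F : Type*} [Field F] (D : Derivation ℤ F F) (K : Subfield F)
    (hK : ∀ a ∈ K, D a ∈ K) : Derivation ℤ K K :=
  Derivation.mk'
    { toFun := fun a => ⟨D a, hK a a.2⟩
      map_add' := fun a b => Subtype.ext (D.map_add a b)
      map_smul' := fun n a => Subtype.ext (by simp) }
    fun a b => Subtype.ext (by simp [D.leibniz])

end Derivation

theorem Transcendental.aeval_ne_zero {R A : Type*} [CommRing R] [CommRing A] [Algebra R A]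
    {x : A} (hx : Transcendental R x) {p : R[X]} (hp : p ≠ 0) : Polynomial.aeval x p ≠ 0 :=
  (map_ne_zero_iff _ (transcendental_iff_injective.mp hx)).mpr hp

theorem Polynomial.squarefree_prod_of_monic_of_irreducible {K : Type*} [Field K]
    (s : Finset K[X])
    (hs : ∀ r ∈ s, r.Monic ∧ Irreducible r) : Squarefree (∏ r ∈ s, r) := by
  classical
  have hs0 : (∏ r ∈ s, r) ≠ 0 := prod_ne_zero_iff.mpr fun r hr => (hs r hr).2.ne_zero
  have hnormalized : s.val.map normalize = s.val :=
    (Multiset.map_congr rfl fun r hr => (hs r hr).1.normalize_eq_self).trans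
      (Multiset.map_id _)
  rw [squarefree_iff_nodup_normalizedFactors hs0, prod_eq_multiset_prod, Multiset.map_id',
    normalizedFactors_prod_eq _ fun r hr => (hs r hr).2, hnormalized]
  exact s.nodup

theorem Polynomial.exists_sum_aeval_div_eq_div_prod {K F ι : Type*} [Field K] [Field F]
    [Algebra K F] {t : F} (s : Finset ι) (num den : ι → K[X])
    (hden : ∀ i ∈ s, aeval t (den i) ≠ 0)
    (hdeg : ∀ i ∈ s, (num i).degree < (den i).degree) :
    ∃ P : K[X], P.degree < (∏ i ∈ s, den i).degree ∧
      ∑ i ∈ s, aeval t (num i) / aeval t (den i) = aeval t P / aeval t (∏ i ∈ s, den i) := by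
  induction s using Finset.cons_induction with
  | empty => exact ⟨0, by simp, by simp⟩
  | cons a s ha ih =>
    simp only [mem_cons, forall_eq_or_imp] at hden hdeg
    obtain ⟨P, hP, hsum⟩ := ih hden.2 hdeg.2
    have hQ : aeval t (∏ i ∈ s, den i) ≠ 0 := by
      rw [map_prod]
      exact prod_ne_zero_iff.mpr hden.2
    have hQ0 : (∏ i ∈ s, den i) ≠ 0 := fun h => hQ (by rw [h, map_zero])
    have ha0 : den a ≠ 0 := fun h => hden.1 (by rw [h, map_zero])
    refine ⟨num a * ∏ i ∈ s, den i + den a * P, ?_, ?_⟩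
    · rw [prod_cons, degree_mul]
      refine (degree_add_le _ _).trans_lt (max_lt ?_ ?_)
      · rw [degree_mul]
        exact WithBot.add_lt_add_right (degree_ne_bot.mpr hQ0) hdeg.1
      · rw [degree_mul]
        exact WithBot.add_lt_add_left (degree_ne_bot.mpr ha0) hP
    · rw [sum_cons, prod_cons, hsum, div_add_div _ _ hden.1 hQ]
      simp only [map_add, map_mul]

namespace Differential

variable {K : Type*} [Field K] [Differential K]

theorem degree_mapCoeffs_lt {p : K[X]} (hp : p.Monic) : (mapCoeffs p).degree < p.degree := by
  rw [degree_eq_natDegree hp.ne_zero, degree_lt_iff_coeff_zero]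
  intro n hn
  rw [coeff_mapCoeffs]
  rcases hn.eq_or_lt with rfl | hlt
  · rw [← leadingCoeff, hp.leadingCoeff, Derivation.map_one_eq_zero]
  · rw [coeff_eq_zero_of_natDegree_lt hlt, map_zero]

theorem degree_implicitDeriv_C_lt {p : K[X]} (hp : p.Monic) (a : K) :
    (implicitDeriv (C a) p).degree < p.degree := by
  simp only [implicitDeriv, Derivation.coe_add, Pi.add_apply, Derivation.smul_apply]
  refine (degree_add_le _ _).trans_lt (max_lt (degree_mapCoeffs_lt hp) ?_)
  rw [smul_eq_mul, ← smul_eq_C_mul]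
  exact (degree_smul_le _ _).trans_lt (degree_derivative_lt hp.ne_zero)

variable {F : Type*} [Field F] [Differential F] [Algebra K F] [DifferentialAlgebra K F]

theorem logDeriv_aeval_eq_sum [DecidableEq K] {t : F} (ht : Transcendental K t) {w : K[X]}
    (hw : w ≠ 0) {s : Finset K[X]} (hs : (normalizedFactors w).toFinset ⊆ s) :
    logDeriv (aeval t w) =
      ∑ r ∈ s, ((normalizedFactors w).count r : F) * logDeriv (aeval t r) +
        algebraMap K F (logDeriv w.leadingCoeff) := by
  have hfactors : ∀ r ∈ normalizedFactors w, aeval t r ≠ 0 := fun r hr =>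
    ht.aeval_ne_zero (ne_zero_of_mem_normalizedFactors hr)
  have hprod : ((normalizedFactors w).map (aeval t)).prod ≠ 0 := by
    simpa [Multiset.prod_eq_zero_iff] using hfactors
  have hlc : algebraMap K F w.leadingCoeff ≠ 0 := by simpa using hw
  conv_lhs => rw [← leadingCoeff_mul_prod_normalizedFactors w]
  rw [map_mul, aeval_C, map_multiset_prod, logDeriv_mul _ _ hlc hprod, logDeriv_algebraMap,
    logDeriv_multisetProd _ hfactors, sum_multiset_map_count, add_comm]
  simp only [nsmul_eq_mul]
  refine congrArg (· + _) (sum_subset hs fun r _ hr => ?_)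
  rw [Multiset.count_eq_zero.mpr (by rwa [Multiset.mem_toFinset] at hr), Nat.cast_zero, zero_mul]

theorem logDeriv_aeval_div_aeval_eq_sum [DecidableEq K] {t : F} (ht : Transcendental K t)
    {p q : K[X]} (hp : p ≠ 0) (hq : q ≠ 0) :
    logDeriv (aeval t p / aeval t q) =
      ∑ r ∈ (normalizedFactors p + normalizedFactors q).toFinset,
        (((normalizedFactors p).count r - (normalizedFactors q).count r : ℤ) : F) *
          logDeriv (aeval t r) +
      algebraMap K F (logDeriv (p.leadingCoeff / q.leadingCoeff)) := by
  rw [logDeriv_div _ _ (ht.aeval_ne_zero hp) (ht.aeval_ne_zero hq),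
    logDeriv_div _ _ (leadingCoeff_ne_zero.mpr hp) (leadingCoeff_ne_zero.mpr hq), map_sub,
    logDeriv_aeval_eq_sum ht hp
      (Multiset.toFinset_subset.mpr (Multiset.subset_of_le (Multiset.le_add_right _ _))),
    logDeriv_aeval_eq_sum ht hq
      (Multiset.toFinset_subset.mpr (Multiset.subset_of_le (Multiset.le_add_left _ _)))]
  simp only [Int.cast_sub, Int.cast_natCast, sub_mul, sum_sub_distrib]
  ring

theorem exists_sum_logDeriv_aeval_eq_div_prod {t : F} {a : K} (hta : t′ = algebraMap K F a)
    (s : Finset K[X]) (hmonic : ∀ r ∈ s, r.Monic) (hne : ∀ r ∈ s, aeval t r ≠ 0)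
    (m : K[X] → ℤ) :
    ∃ P : K[X], P.degree < (∏ r ∈ s, r).degree ∧
      ∑ r ∈ s, (m r : F) * logDeriv (aeval t r) = aeval t P / aeval t (∏ r ∈ s, r) := by
  have hderiv : ∀ r : K[X], (aeval t r)′ = aeval t (implicitDeriv (C a) r) :=
    deriv_aeval_eq_implicitDeriv t (C a) (by rw [hta, aeval_C])
  have hsum : ∑ r ∈ s, (m r : F) * logDeriv (aeval t r) =
      ∑ r ∈ s, aeval t (m r • implicitDeriv (C a) r) / aeval t r := by
    refine sum_congr rfl fun r _ => ?_
    rw [logDeriv, hderiv, map_zsmul, zsmul_eq_mul, mul_div_assoc]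
  rw [hsum]
  exact exists_sum_aeval_div_eq_div_prod s _ id hne
    fun r hr => (degree_smul_le _ _).trans_lt (degree_implicitDeriv_C_lt (hmonic r hr) a)

end Differential

theorem logarithmic_derivative_decomposition_general (F : Type*) [Field F]
    (δ : F → F)
    (hδadd : ∀ a b : F, δ (a + b) = δ a + δ b)
    (hδmul : ∀ a b : F, δ (a * b) = δ a * b + a * δ b)
    (K : Subfield F) (hK : ∀ a ∈ K, δ a ∈ K)
    (t : F) (htr : Transcendental ↥K t) (ht : δ t ∈ K)
    (hgen : Subfield.closure ((K : Set F) ∪ {t}) = ⊤)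
    (f : F) (hlog : ∃ u : F, u ≠ 0 ∧ f = δ u / u) :
    ∃ g h : F, f = g + h ∧
      (∃ (k : ℕ) (m : Fin k → ℤ) (p : Fin k → Polynomial ↥K),
        (∀ i, (p i).Monic ∧ Irreducible (p i)) ∧
        g = ∑ i, (m i : F) *
          (δ (Polynomial.aeval t (p i)) / Polynomial.aeval t (p i))) ∧
      (∃ p q : Polynomial ↥K, q ≠ 0 ∧ p.degree < q.degree ∧ Squarefree q ∧
        g = Polynomial.aeval t p / Polynomial.aeval t q) ∧
      h ∈ K ∧ (∃ α : F, α ∈ K ∧ α ≠ 0 ∧ h = δ α / α) := by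
  classical
  let _ : Differential F := ⟨.ofAddLeibniz δ hδadd hδmul⟩
  let _ : Differential K := ⟨Differential.deriv.restrictSubfield K hK⟩
  have _ : DifferentialAlgebra K F := ⟨fun _ => rfl⟩
  obtain ⟨u, hu0, rfl⟩ := hlog
  have hadjoin : IntermediateField.adjoin K {t} = ⊤ :=
    IntermediateField.toSubfield_injective <| by
      rw [IntermediateField.adjoin_toSubfield, IntermediateField.top_toSubfield,
        show Set.range (algebraMap K F) = K from Subtype.range_coe, hgen]
  obtain ⟨p, q, rfl⟩ := (IntermediateField.mem_adjoin_simple_iff (F := K) (α := t) u).mp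
    (hadjoin ▸ IntermediateField.mem_top)
  have hp : p ≠ 0 := by rintro rfl; simp at hu0
  have hq : q ≠ 0 := by rintro rfl; simp at hu0
  set s := (normalizedFactors p + normalizedFactors q).toFinset
  have hs : ∀ r ∈ s, r.Monic ∧ Irreducible r := by
    intro r hr
    simp only [s, Multiset.mem_toFinset, Multiset.mem_add, Polynomial.mem_normalizedFactors_iff hp,
      Polynomial.mem_normalizedFactors_iff hq] at hr
    tauto
  set m : K[X] → ℤ := fun r => (normalizedFactors p).count r - (normalizedFactors q).count r
  obtain ⟨P, hPdeg, hP⟩ := exists_sum_logDeriv_aeval_eq_div_prod (a := ⟨δ t, ht⟩) rfl s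
    (fun r hr => (hs r hr).1) (fun r hr => htr.aeval_ne_zero (hs r hr).2.ne_zero) m
  set c := p.leadingCoeff / q.leadingCoeff
  refine ⟨_, _, logDeriv_aeval_div_aeval_eq_sum htr hp hq,
    ⟨#s, fun i => m (s.equivFin.symm i), fun i => s.equivFin.symm i,
      fun i => hs _ (s.equivFin.symm i).2, ?_⟩,
    ⟨P, _, prod_ne_zero_iff.mpr fun r hr => (hs r hr).2.ne_zero, hPdeg,
      squarefree_prod_of_monic_of_irreducible s hs, hP⟩,
    (logDeriv c).2, ⟨c, c.2, by simp [c, hp, hq], logDeriv_algebraMap c⟩⟩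
  rw [← sum_coe_sort s]
  exact (Equiv.sum_comp s.equivFin.symm _).symm

/-- Let `K` be a differential field of characteristic zero and `t` a primitive
generator over `K`, with `F = K(t)`.  Every logarithmic derivative `f ∈ K(t)`
can be written as `f = g + h`, where `g = Σᵢ mᵢ pᵢ(t)′/pᵢ(t)` is a `t`-simple
element with `mᵢ ∈ ℤ` and `pᵢ ∈ K[t]` monic irreducible, and `h ∈ K` is a
logarithmic derivative in `K`. -/
theorem logarithmic_derivative_decomposition (F : Type*) [Field F] [CharZero F]
    (δ : F → F)
    (hδadd : ∀ a b : F, δ (a + b) = δ a + δ b)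
    (hδmul : ∀ a b : F, δ (a * b) = δ a * b + a * δ b)
    (K : Subfield F) (hK : ∀ a ∈ K, δ a ∈ K)
    (t : F) (htr : Transcendental ↥K t) (ht : δ t ∈ K)
    (hgen : Subfield.closure ((K : Set F) ∪ {t}) = ⊤)
    (hnewconst : ∀ c : F, δ c = 0 → c ∈ K)
    (f : F) (hlog : ∃ u : F, u ≠ 0 ∧ f = δ u / u) :
    ∃ g h : F, f = g + h ∧
      (∃ (k : ℕ) (m : Fin k → ℤ) (p : Fin k → Polynomial ↥K),
        (∀ i, (p i).Monic ∧ Irreducible (p i)) ∧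
        g = ∑ i, (m i : F) *
          (δ (Polynomial.aeval t (p i)) / Polynomial.aeval t (p i))) ∧
      (∃ p q : Polynomial ↥K, q ≠ 0 ∧ p.degree < q.degree ∧ Squarefree q ∧
        g = Polynomial.aeval t p / Polynomial.aeval t q) ∧
      h ∈ K ∧ (∃ α : F, α ∈ K ∧ α ≠ 0 ∧ h = δ α / α) :=
  logarithmic_derivative_decomposition_general F δ hδadd hδmul K hK t htr ht hgen f hlog
end

section
/- Let K be a differential field of characteristic zero and t a primitive generator over K. If a polynomial p ∈ K[t] lies in K(t)′ (is the derivative of some element of K(t)), then the leading coefficient of p equals c·t′ + b′ for some constant c ∈ C_K and some b ∈ K. In particular, if p ∈ K ∩ K(t)′, then p − c·t′ ∈ K′ for some c ∈ C_K. -/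
set_option linter.unusedSectionVars false
set_option maxHeartbeats 1000000

namespace LiouvillePrimAux

open Polynomial

variable {F : Type*} [Field F]
variable (δ : F → F) (hδadd : ∀ a b : F, δ (a + b) = δ a + δ b)
    (hδmul : ∀ a b : F, δ (a * b) = δ a * b + a * δ b)
variable (K : Subfield F) (hK : ∀ a ∈ K, δ a ∈ K)

noncomputable def dK : ↥K → ↥K := fun a => ⟨δ a, hK a a.2⟩

@[simp] theorem dK_coe (a : ↥K) : ((dK δ K hK a : ↥K) : F) = δ a := rfl

include hδadd hδmul

theorem δ_zero' : δ 0 = 0 := by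
  have := hδadd 0 0; simp only [add_zero] at this; linear_combination -this

theorem δ_one' : δ 1 = 0 := by
  have := hδmul 1 1; simp only [mul_one, one_mul] at this; linear_combination -this

theorem δ_natCast' (n : ℕ) : δ (n : F) = 0 := by
  induction n with
  | zero => simpa using δ_zero' δ hδadd hδmul
  | succ k ih => push_cast; rw [hδadd, ih, δ_one' δ hδadd hδmul, add_zero]

theorem δ_pow' (x : F) (n : ℕ) : δ (x ^ n) = (n : F) * x ^ (n - 1) * δ x := by
  induction n with
  | zero => simpa using δ_one' δ hδadd hδmul
  | succ k ih =>
    rw [pow_succ, hδmul, ih]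
    cases k with
    | zero => simp
    | succ m => push_cast [Nat.add_sub_cancel]; ring

theorem dK_zero : dK δ K hK 0 = 0 :=
  Subtype.ext (by simpa using δ_zero' δ hδadd hδmul)

theorem dK_add (a b : ↥K) : dK δ K hK (a + b) = dK δ K hK a + dK δ K hK b :=
  Subtype.ext (by push_cast; exact hδadd a b)

noncomputable def Dpoly (τ : ↥K) (q : Polynomial ↥K) : Polynomial ↥K :=
  q.sum (fun n a => C (dK δ K hK a) * X ^ n) + derivative q * C τ

theorem coeff_Dpoly (τ : ↥K) (q : Polynomial ↥K) (i : ℕ) :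
    (Dpoly δ K hK τ q).coeff i = dK δ K hK (q.coeff i) + q.coeff (i + 1) * (i + 1) * τ := by
  rw [Dpoly, coeff_add, coeff_mul_C, coeff_derivative, Polynomial.sum_def,
    Polynomial.finset_sum_coeff]
  congr 1
  simp only [Polynomial.coeff_C_mul, Polynomial.coeff_X_pow, mul_ite, mul_one, mul_zero]
  rw [Finset.sum_ite_eq q.support i]
  by_cases h : i ∈ q.support
  · simp [h]
  · simp [h, Polynomial.notMem_support_iff.mp h, dK_zero δ hδadd hδmul K hK]

theorem Dpoly_add (τ : ↥K) (q r : Polynomial ↥K) :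
    Dpoly δ K hK τ (q + r) = Dpoly δ K hK τ q + Dpoly δ K hK τ r := by
  ext i
  simp only [coeff_Dpoly δ hδadd hδmul K hK, coeff_add,
    dK_add δ hδadd hδmul K hK]
  push_cast
  ring

theorem Dpoly_monomial (τ : ↥K) (n : ℕ) (a : ↥K) :
    Dpoly δ K hK τ (monomial n a) =
      C (dK δ K hK a) * X ^ n + derivative (monomial n a) * C τ := by
  rw [Dpoly, Polynomial.sum_monomial_index]
  rw [dK_zero δ hδadd hδmul K hK, map_zero, zero_mul]

variable (t : F) (τ : ↥K) (hτ : (τ : F) = δ t)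

include hτ in
theorem aeval_Dpoly (q : Polynomial ↥K) :
    aeval t (Dpoly δ K hK τ q) = δ (aeval t q) := by
  induction q using Polynomial.induction_on' with
  | add p q hp hq =>
    rw [Dpoly_add δ hδadd hδmul K hK, map_add, map_add, hp, hq, hδadd]
  | monomial n a =>
    have hmono : (aeval t) ((monomial n) a) = (a : F) * t ^ n := by
      rw [aeval_monomial]; norm_cast
    have hmono2 : (aeval t) ((monomial (n - 1)) (a * (n : ↥K))) =
        (a : F) * (n : F) * t ^ (n - 1) := by
      rw [aeval_monomial]; norm_cast
    rw [Dpoly_monomial δ hδadd hδmul K hK, map_add, map_mul, map_mul, map_pow,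
      derivative_monomial, aeval_C, aeval_X, hmono, hmono2,
      hδmul, δ_pow' δ hδadd hδmul]
    have h1 : (algebraMap (↥K) F) (dK δ K hK a) = δ (a : F) := rfl
    have h3 : (aeval t) (C τ) = δ t := by rw [aeval_C]; exact hτ
    rw [h1, h3]
    ring

variable (htr : Transcendental ↥K t)

omit hδadd hδmul in
include htr in
theorem aeval_inj : Function.Injective (aeval t : Polynomial ↥K →ₐ[↥K] F) :=
  transcendental_iff_injective.mp htr

include hτ htr in
theorem Dpoly_zero : Dpoly δ K hK τ 0 = 0 := by
  apply aeval_inj K t htr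
  rw [aeval_Dpoly δ hδadd hδmul K hK t τ hτ, map_zero]
  exact δ_zero' δ hδadd hδmul

include hτ htr in
theorem Dpoly_mul (q r : Polynomial ↥K) :
    Dpoly δ K hK τ (q * r) = Dpoly δ K hK τ q * r + q * Dpoly δ K hK τ r := by
  apply aeval_inj K t htr
  simp only [map_add, map_mul, aeval_Dpoly δ hδadd hδmul K hK t τ hτ]
  exact hδmul _ _

include hτ htr in
theorem Dpoly_pow (r : Polynomial ↥K) (k : ℕ) :
    Dpoly δ K hK τ (r ^ k) =
      (k : Polynomial ↥K) * r ^ (k - 1) * Dpoly δ K hK τ r := by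
  apply aeval_inj K t htr
  simp only [map_mul, map_pow, map_natCast, aeval_Dpoly δ hδadd hδmul K hK t τ hτ]
  exact δ_pow' δ hδadd hδmul _ _

omit hδadd hδmul in
/-- Extract the maximal power of `r` from a nonzero polynomial. -/
theorem extract_pow {R : Type*} [Field R] (r : Polynomial R) (hr : 0 < r.natDegree) :
    ∀ n : ℕ, ∀ g : Polynomial R, g ≠ 0 → g.natDegree ≤ n →
      ∃ k h, g = r ^ k * h ∧ ¬ r ∣ h := by
  intro n
  induction n with
  | zero =>
    intro g hg hdeg
    refine ⟨0, g, by ring, fun hdvd => ?_⟩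
    have := Polynomial.natDegree_le_of_dvd hdvd hg
    omega
  | succ m ih =>
    intro g hg hdeg
    by_cases hdvd : r ∣ g
    · obtain ⟨g', rfl⟩ := hdvd
      have hr0 : r ≠ 0 := fun h => by simp [h] at hr
      have hg' : g' ≠ 0 := right_ne_zero_of_mul hg
      have hlt : g'.natDegree ≤ m := by
        have := Polynomial.natDegree_mul hr0 hg'
        omega
      obtain ⟨k, h, he, hnd⟩ := ih g' hg' hlt
      exact ⟨k + 1, h, by rw [he]; ring, hnd⟩
    · exact ⟨0, g, by ring, hdvd⟩

end LiouvillePrimAux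

open LiouvillePrimAux Polynomial in
/-- Let `K` be a differential field of characteristic zero and `t` a primitive
generator over `K`, with `F = K(t)`.  If a polynomial `p ∈ K[t]` is the
derivative of an element of `K(t)`, then its leading coefficient equals
`c·t′ + b′` for some constant `c ∈ C_K` and some `b ∈ K`.  In particular, if an
element `a ∈ K` is the derivative of an element of `K(t)`, then
`a = c·t′ + b′`, i.e. `a ≡ c·t′ mod K′`. -/
theorem leading_coefficient_of_integrable_polynomial (F : Type*) [Field F] [CharZero F]
    (δ : F → F)
    (hδadd : ∀ a b : F, δ (a + b) = δ a + δ b)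
    (hδmul : ∀ a b : F, δ (a * b) = δ a * b + a * δ b)
    (K : Subfield F) (hK : ∀ a ∈ K, δ a ∈ K)
    (t : F) (htr : Transcendental ↥K t) (ht : δ t ∈ K)
    (hgen : Subfield.closure ((K : Set F) ∪ {t}) = ⊤)
    (hnewconst : ∀ c : F, δ c = 0 → c ∈ K) :
    (∀ p : Polynomial ↥K, (∃ w : F, δ w = Polynomial.aeval t p) →
      ∃ c b : F, c ∈ K ∧ δ c = 0 ∧ b ∈ K ∧
        (p.leadingCoeff : F) = c * δ t + δ b) ∧
    (∀ a : F, a ∈ K → (∃ w : F, δ w = a) →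
      ∃ c b : F, c ∈ K ∧ δ c = 0 ∧ b ∈ K ∧ a = c * δ t + δ b) := by
  classical
  set τ : ↥K := ⟨δ t, ht⟩ with hτdef
  have hτ : (τ : F) = δ t := rfl
  have hinj : Function.Injective (aeval t : Polynomial ↥K →ₐ[↥K] F) :=
    aeval_inj K t htr
  have hδ0 : δ 0 = 0 := δ_zero' δ hδadd hδmul
  -- t is not in K
  have htK : t ∉ K := by
    intro htK
    have hco : (algebraMap (↥K) F) ⟨t, htK⟩ = t := rfl
    exact htr ⟨X - C ⟨t, htK⟩, X_sub_C_ne_zero _, by rw [map_sub, aeval_X, aeval_C, hco, sub_self]⟩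
  -- Step 1: every antiderivative of a polynomial is a polynomial
  have hstep1 : ∀ p : Polynomial ↥K, (∃ w : F, δ w = Polynomial.aeval t p) →
      ∃ q : Polynomial ↥K, Dpoly δ K hK τ q = p := by
    intro p ⟨w, hw⟩
    -- w is a rational function of t
    have hmem : w ∈ IntermediateField.adjoin ↥K {t} := by
      have hle : Subfield.closure ((K : Set F) ∪ {t}) ≤
          (IntermediateField.adjoin ↥K {t}).toSubfield := by
        apply Subfield.closure_le.mpr
        rintro x (hx | hx)
        · exact (IntermediateField.adjoin ↥K {t}).algebraMap_mem ⟨x, hx⟩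
        · exact IntermediateField.subset_adjoin _ _ hx
      exact hle (hgen ▸ Subfield.mem_top w)
    obtain ⟨f₀, g₀, hw0⟩ := (IntermediateField.mem_adjoin_simple_iff ↥K w).mp hmem
    by_cases hg₀ : aeval t g₀ = 0
    · -- degenerate: w = 0, so p = 0
      rw [hg₀, div_zero] at hw0
      refine ⟨0, hinj ?_⟩
      rw [aeval_Dpoly δ hδadd hδmul K hK t τ hτ, map_zero, hδ0, ← hw, hw0, hδ0]
    -- reduce the fraction
    have hg₀0 : g₀ ≠ 0 := fun h => hg₀ (by rw [h, map_zero])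
    set d := EuclideanDomain.gcd f₀ g₀ with hd
    have hdvdf : d ∣ f₀ := EuclideanDomain.gcd_dvd_left f₀ g₀
    have hdvdg : d ∣ g₀ := EuclideanDomain.gcd_dvd_right f₀ g₀
    have hd0 : d ≠ 0 := fun h => hg₀0 (EuclideanDomain.gcd_eq_zero_iff.mp h).2
    set f := f₀ / d with hfdef
    set g := g₀ / d with hgdef
    have hfd : d * f = f₀ := EuclideanDomain.mul_div_cancel' hd0 hdvdf
    have hgd : d * g = g₀ := EuclideanDomain.mul_div_cancel' hd0 hdvdg
    have hco : IsCoprime f g := by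
      have hbez := EuclideanDomain.gcd_eq_gcd_ab f₀ g₀
      refine ⟨EuclideanDomain.gcdA f₀ g₀, EuclideanDomain.gcdB f₀ g₀, ?_⟩
      have h1 : d * (EuclideanDomain.gcdA f₀ g₀ * f + EuclideanDomain.gcdB f₀ g₀ * g) = d := by
        calc d * (EuclideanDomain.gcdA f₀ g₀ * f + EuclideanDomain.gcdB f₀ g₀ * g)
            = (d * f) * EuclideanDomain.gcdA f₀ g₀ + (d * g) * EuclideanDomain.gcdB f₀ g₀ := by
              ring
          _ = f₀ * EuclideanDomain.gcdA f₀ g₀ + g₀ * EuclideanDomain.gcdB f₀ g₀ := by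
              rw [hfd, hgd]
          _ = d := hbez.symm
      have h2 := mul_left_cancel₀ hd0 (h1.trans (mul_one d).symm)
      linear_combination h2
    have hgaeval : aeval t g ≠ 0 := by
      intro h
      apply hg₀
      rw [← hgd, map_mul, h, mul_zero]
    have hdaeval : aeval t d ≠ 0 := by
      intro h
      apply hg₀
      rw [← hgd, map_mul, h, zero_mul]
    have hwg : w = aeval t f / aeval t g := by
      rw [hw0, ← hfd, ← hgd, map_mul, map_mul, mul_div_mul_left _ _ hdaeval]
    have hfw : aeval t f = w * aeval t g := by
      rw [hwg]; field_simp
    -- the key polynomial identity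
    have hkey : Dpoly δ K hK τ f * g = p * g ^ 2 + f * Dpoly δ K hK τ g := by
      apply hinj
      simp only [map_add, map_mul, map_pow, aeval_Dpoly δ hδadd hδmul K hK t τ hτ]
      rw [hfw, hδmul, hw]
      ring
    -- g must be a unit
    have hgunit : IsUnit g := by
      by_contra hnu
      have hgne : g ≠ 0 := fun h => hgaeval (by rw [h, map_zero])
      obtain ⟨r, hrm, hri, hrd⟩ := g.exists_monic_irreducible_factor hnu
      have hrdegpos : 0 < r.natDegree := hri.natDegree_pos
      have hrne : r ≠ 0 := fun h => by simp [h] at hrdegpos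
      obtain ⟨k, h, hge, hrh⟩ :=
        extract_pow r hrdegpos g.natDegree g hgne le_rfl
      have hk1 : 1 ≤ k := by
        rcases Nat.eq_zero_or_pos k with hk | hk
        · exfalso; apply hrh; rw [hk, pow_zero, one_mul] at hge; exact hge ▸ hrd
        · exact hk
      obtain ⟨m, rfl⟩ : ∃ m, k = m + 1 := ⟨k - 1, by omega⟩
      -- Dpoly r is a nonzero polynomial of degree < deg r
      have hDr0 : Dpoly δ K hK τ r ≠ 0 := by
        intro hDr
        have : δ (aeval t r) = 0 := by
          rw [← aeval_Dpoly δ hδadd hδmul K hK t τ hτ, hDr, map_zero]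
        have hrK : aeval t r ∈ K := hnewconst _ this
        have : r = C ⟨aeval t r, hrK⟩ := by
          apply hinj
          rw [aeval_C]
          rfl
        rw [this] at hrdegpos
        simp at hrdegpos
      have hDrdeg : (Dpoly δ K hK τ r).natDegree < r.natDegree := by
        have hle : (Dpoly δ K hK τ r).natDegree ≤ r.natDegree - 1 := by
          apply Polynomial.natDegree_le_iff_coeff_eq_zero.mpr
          intro i hi
          rw [coeff_Dpoly δ hδadd hδmul K hK]
          have hin : r.natDegree ≤ i := by omega
          rcases eq_or_lt_of_le hin with hin' | hin'
          · rw [← hin', ← Polynomial.leadingCoeff, hrm.leadingCoeff]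
            have : r.coeff (r.natDegree + 1) = 0 :=
              Polynomial.coeff_eq_zero_of_natDegree_lt (by omega)
            rw [hin'] at this ⊢
            rw [this]
            have h1 : dK δ K hK 1 = 0 :=
              Subtype.ext (by simpa using δ_one' δ hδadd hδmul)
            rw [h1]
            ring
          · have h1 : r.coeff i = 0 := Polynomial.coeff_eq_zero_of_natDegree_lt hin'
            have h2 : r.coeff (i + 1) = 0 :=
              Polynomial.coeff_eq_zero_of_natDegree_lt (by omega)
            rw [h1, h2, dK_zero δ hδadd hδmul K hK]
            ring
        omega
      have hrDr : ¬ r ∣ Dpoly δ K hK τ r := by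
        intro hdvd
        have := Polynomial.natDegree_le_of_dvd hdvd hDr0
        omega
      -- divisibility argument
      have hrkg : r ^ (m + 1) ∣ g := ⟨h, hge⟩
      have hDg : Dpoly δ K hK τ g =
          ((m + 1 : ℕ) : Polynomial ↥K) * r ^ m * Dpoly δ K hK τ r * h +
            r ^ (m + 1) * Dpoly δ K hK τ h := by
        rw [hge, Dpoly_mul δ hδadd hδmul K hK t τ hτ htr,
          Dpoly_pow δ hδadd hδmul K hK t τ hτ htr]
        simp only [Nat.add_sub_cancel]
      have hdvd_main : r ^ (m + 1) ∣ f * Dpoly δ K hK τ g := by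
        have h1 : r ^ (m + 1) ∣ Dpoly δ K hK τ f * g := Dvd.dvd.mul_left hrkg _
        have h2 : r ^ (m + 1) ∣ p * g ^ 2 := by
          apply Dvd.dvd.mul_left
          exact hrkg.trans (dvd_pow_self g two_ne_zero)
        have : f * Dpoly δ K hK τ g = Dpoly δ K hK τ f * g - p * g ^ 2 := by
          linear_combination -hkey
        rw [this]
        exact dvd_sub h1 h2
      set M : Polynomial ↥K :=
        ((m + 1 : ℕ) : Polynomial ↥K) * f * Dpoly δ K hK τ r * h +
          r * (f * Dpoly δ K hK τ h) with hM
      have hfDg : f * Dpoly δ K hK τ g = r ^ m * M := by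
        rw [hDg, hM]; ring
      have hrM : r ∣ M := by
        have h1 : r ^ m * r ∣ r ^ m * M := by
          rw [← pow_succ, ← hfDg]; exact hdvd_main
        exact (mul_dvd_mul_iff_left (pow_ne_zero m hrne)).mp h1
      have hrprod : r ∣ ((m + 1 : ℕ) : Polynomial ↥K) * f * Dpoly δ K hK τ r * h := by
        have h2 : r ∣ r * (f * Dpoly δ K hK τ h) := dvd_mul_right _ _
        have : ((m + 1 : ℕ) : Polynomial ↥K) * f * Dpoly δ K hK τ r * h =
            M - r * (f * Dpoly δ K hK τ h) := by rw [hM]; ring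
        rw [this]
        exact dvd_sub hrM h2
      have hprime : Prime r := hri.prime
      rcases (hprime.dvd_mul.mp hrprod) with hx | hx
      · rcases (hprime.dvd_mul.mp hx) with hy | hy
        · rcases (hprime.dvd_mul.mp hy) with hz | hz
          · -- r ∣ (m+1 : K[X])
            have hne : ((m + 1 : ℕ) : Polynomial ↥K) ≠ 0 :=
              Nat.cast_ne_zero.mpr (Nat.succ_ne_zero m)
            have := Polynomial.natDegree_le_of_dvd hz hne
            rw [← Polynomial.C_eq_natCast, Polynomial.natDegree_C] at this
            omega
          · exact hri.not_isUnit (hco.isUnit_of_dvd' hz hrd)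
        · exact hrDr hy
      · exact hrh hx
    -- conclude: w is a polynomial in t
    obtain ⟨u, hu, hCu⟩ := Polynomial.isUnit_iff.mp hgunit
    have hu0 : u ≠ 0 := hu.ne_zero
    refine ⟨C u⁻¹ * f, hinj ?_⟩
    have haq : aeval t (C u⁻¹ * f) = w := by
      rw [map_mul, aeval_C, hwg, ← hCu, aeval_C]
      have hcoeinv : (algebraMap (↥K) F) u⁻¹ = ((u : F))⁻¹ := by
        have e1 : (algebraMap (↥K) F) u⁻¹ = ((u⁻¹ : ↥K) : F) := rfl
        rw [e1]; push_cast; ring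
      rw [hcoeinv]
      have hune : ((u : F)) ≠ 0 := by exact_mod_cast hu0
      have hcoe2 : (algebraMap (↥K) F) u = (u : F) := rfl
      rw [hcoe2]
      field_simp
    rw [aeval_Dpoly δ hδadd hδmul K hK t τ hτ, haq, hw]
  -- Step 2: leading coefficient analysis
  have hmain : ∀ p : Polynomial ↥K, (∃ w : F, δ w = Polynomial.aeval t p) →
      ∃ c b : F, c ∈ K ∧ δ c = 0 ∧ b ∈ K ∧
        (p.leadingCoeff : F) = c * δ t + δ b := by
    intro p hp
    obtain ⟨q, hDq⟩ := hstep1 p hp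
    by_cases hp0 : p = 0
    · exact ⟨0, 0, K.zero_mem, hδ0, K.zero_mem, by
        rw [hp0]; simp [hδ0]⟩
    have hq0 : q ≠ 0 := by
      rintro rfl
      exact hp0 (by rw [← hDq]; exact Dpoly_zero δ hδadd hδmul K hK t τ hτ htr)
    set n := q.natDegree with hn
    have hcoef : ∀ i, p.coeff i =
        dK δ K hK (q.coeff i) + q.coeff (i + 1) * (i + 1) * τ := by
      intro i
      rw [← hDq, coeff_Dpoly δ hδadd hδmul K hK]
    have hqn1 : q.coeff (n + 1) = 0 :=
      Polynomial.coeff_eq_zero_of_natDegree_lt (by omega)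
    have han : q.coeff n ≠ 0 := by
      rw [hn, ← Polynomial.leadingCoeff]
      exact Polynomial.leadingCoeff_ne_zero.mpr hq0
    have hdeg : p.natDegree ≤ n := by
      apply Polynomial.natDegree_le_iff_coeff_eq_zero.mpr
      intro i hi
      rw [hcoef i, Polynomial.coeff_eq_zero_of_natDegree_lt (by omega : n < i),
        Polynomial.coeff_eq_zero_of_natDegree_lt (by omega : n < i + 1),
        dK_zero δ hδadd hδmul K hK]
      ring
    by_cases hc : dK δ K hK (q.coeff n) = 0
    · -- leading coefficient of q is a constant; degree drops
      have hpn : p.coeff n = 0 := by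
        rw [hcoef n, hc, hqn1]
        ring
      rcases Nat.eq_zero_or_pos n with hn0 | hnpos
      · -- n = 0 : then p = 0, contradiction
        exfalso
        apply hp0
        ext i
        rcases Nat.eq_zero_or_pos i with hi0 | hipos
        · rw [hi0, ← hn0]; rw [hpn]; rfl
        · rw [Polynomial.coeff_eq_zero_of_natDegree_lt (by omega)]; rfl
      -- n ≥ 1
      have hdeg' : p.natDegree ≤ n - 1 := by
        apply Polynomial.natDegree_le_iff_coeff_eq_zero.mpr
        intro i hi
        rcases eq_or_lt_of_le (show n ≤ i by omega) with hin | hin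
        · rw [← hin]; exact hpn
        · rw [hcoef i, Polynomial.coeff_eq_zero_of_natDegree_lt (by omega : n < i),
            Polynomial.coeff_eq_zero_of_natDegree_lt (by omega : n < i + 1),
            dK_zero δ hδadd hδmul K hK]
          ring
      have hidx : n - 1 + 1 = n := by omega
      set cst : ↥K := q.coeff n * (n : ↥K) with hcst
      have hδan : δ ((q.coeff n : ↥K) : F) = 0 := by
        have := congrArg (Subtype.val) hc
        simpa using this
      have hcoe : ((cst : ↥K) : F) = ((q.coeff n : ↥K) : F) * (n : F) := by
        rw [hcst]; push_cast; ring
      have hδcst : δ ((cst : ↥K) : F) = 0 := by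
        rw [hcoe, hδmul, hδan, δ_natCast' δ hδadd hδmul]
        ring
      have hcst0 : (cst : ↥K) ≠ 0 := by
        rw [hcst]
        exact mul_ne_zero han (Nat.cast_ne_zero.mpr (by omega))
      have hcstF : ((cst : ↥K) : F) ≠ 0 := by exact_mod_cast hcst0
      have hidx2 : ((n - 1 : ℕ) : ↥K) + 1 = ((n : ℕ) : ↥K) := by exact_mod_cast hidx
      have hkeycoef : p.coeff (n - 1) =
          dK δ K hK (q.coeff (n - 1)) + cst * τ := by
        rw [hcoef (n - 1), hidx, hidx2, hcst]
      set A : F := ((q.coeff (n - 1) : ↥K) : F) with hA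
      have hnz : p.coeff (n - 1) ≠ 0 := by
        intro hzero
        rw [hkeycoef] at hzero
        have hF : δ A + (cst : F) * δ t = 0 := by
          have h0 := congrArg (Subtype.val) hzero
          push_cast at h0
          rw [hA]
          simpa using h0
        set v : F := A / (cst : F) with hv
        have hveq : (cst : F) * v = A := by
          rw [hv]; field_simp
        have hδA : δ A = (cst : F) * δ v := by
          have h1 := hδmul ((cst : F)) v
          rw [hveq, hδcst] at h1
          linear_combination h1
        have hsum : δ (t + v) = 0 := by
          rw [hδadd]
          have h2 : (cst : F) * (δ t + δ v) = 0 := by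
            rw [mul_add, ← hδA]
            linear_combination hF
          rcases mul_eq_zero.mp h2 with h | h
          · exact absurd h hcstF
          · exact h
        have htv : t + v ∈ K := hnewconst _ hsum
        have hvK : v ∈ K := K.div_mem (SetLike.coe_mem _) (SetLike.coe_mem _)
        have : t ∈ K := by
          have := K.sub_mem htv hvK
          simpa using this
        exact htK this
      have hdegeq : p.natDegree = n - 1 :=
        le_antisymm hdeg' (Polynomial.le_natDegree_of_ne_zero hnz)
      refine ⟨((cst : ↥K) : F), A, SetLike.coe_mem _, hδcst, SetLike.coe_mem _, ?_⟩
      rw [Polynomial.leadingCoeff, hdegeq, hkeycoef]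
      push_cast [dK_coe]
      ring
    · -- leading coefficient of D q at degree n is nonzero
      have hpn : p.coeff n = dK δ K hK (q.coeff n) := by
        rw [hcoef n, hqn1]
        ring
      have hpnne : p.coeff n ≠ 0 := hpn ▸ hc
      have hdege : p.natDegree = n :=
        le_antisymm hdeg (Polynomial.le_natDegree_of_ne_zero hpnne)
      refine ⟨0, ((q.coeff n : ↥K) : F), K.zero_mem, hδ0, (q.coeff n).2, ?_⟩
      rw [Polynomial.leadingCoeff, hdege, hpn]
      simp [dK_coe]
  refine ⟨hmain, ?_⟩
  intro a ha ⟨w, hw⟩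
  have := hmain (C ⟨a, ha⟩) ⟨w, by rwa [aeval_C]⟩
  rwa [Polynomial.leadingCoeff_C] at this
end

section
/- Let K₀ ⊂ K₁ ⊂ ⋯ ⊂ Kₙ be a tower of differential fields of characteristic zero where Kᵢ = Kᵢ₋₁(tᵢ) with each tᵢ transcendental over Kᵢ₋₁ and tᵢ′ ∈ Kᵢ₋₁, and C_{Kᵢ} = C_{Kᵢ₋₁} for all i. If t₁′, …, tₙ′ are linearly dependent over the constant field C = C_{K₀}, then some tᵢ′ ∈ Kᵢ₋₁′, contradicting the primitive generator property; hence t₁′, …, tₙ′ are C-linearly independent. -/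
/-!
If `∑ cᵢ tᵢ′ = 0` with constants `cᵢ ∈ K₀`, then `u = ∑ cᵢ tᵢ` is a constant. Since constants
do not grow along the tower, `u ∈ K₀`. Taking `j` maximal with `cⱼ ≠ 0`, every other summand
lies in `Kⱼ₋₁`, so `tⱼ = cⱼ⁻¹ (u - ∑_{i ≠ j} cᵢ tᵢ) ∈ Kⱼ₋₁`, contradicting transcendence.
-/

open Finset

theorem Subfield.notMem_of_transcendental {F : Type*} [Field F] {L : Subfield F} {x : F}
    (h : Transcendental L x) : x ∉ L :=
  fun hx ↦ h (isAlgebraic_algebraMap (⟨x, hx⟩ : L))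

theorem map_sum_mul_of_map_eq_zero {R ι : Type*} [Ring R] (δ : R → R)
    (hadd : ∀ a b, δ (a + b) = δ a + δ b) (hmul : ∀ a b, δ (a * b) = δ a * b + a * δ b)
    (s : Finset ι) (c t : ι → R) (hc : ∀ i ∈ s, δ (c i) = 0) :
    δ (∑ i ∈ s, c i * t i) = ∑ i ∈ s, c i * δ (t i) := by
  rw [← AddMonoidHom.mk'_apply δ hadd, map_sum]
  refine sum_congr rfl fun i hi ↦ ?_
  simp [hmul, hc i hi]

namespace Fin

theorem mem_zero_of_mem_of_forall_mem_castSucc {α S : Type*} [SetLike S α] {n : ℕ}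
    (K : Fin (n + 1) → S) {p : α → Prop}
    (hdesc : ∀ i : Fin n, ∀ y ∈ K i.succ, p y → y ∈ K i.castSucc) {y : α} (hy : p y) :
    ∀ j, y ∈ K j → y ∈ K 0 := by
  intro j
  induction j using Fin.induction with
  | zero => exact id
  | succ j ih => exact fun h ↦ ih (hdesc j y h hy)

variable {F : Type*} [Field F] {n : ℕ} {K : Fin (n + 1) → Subfield F} {t c : Fin n → F}

theorem sum_erase_mul_mem_castSucc (hK : Monotone K) (ht : ∀ i, t i ∈ K i.succ)
    (hc : ∀ i, c i ∈ K 0) {j : Fin n} (hj : ∀ i, j < i → c i = 0) :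
    ∑ i ∈ univ.erase j, c i * t i ∈ K j.castSucc := by
  refine sum_mem fun i hi ↦ ?_
  rcases lt_or_gt_of_ne (ne_of_mem_erase hi) with hij | hji
  · exact mul_mem (hK (zero_le _) (hc i)) (hK (succ_le_castSucc_iff.2 hij) (ht i))
  · simp [hj i hji]

theorem exists_mem_castSucc_of_sum_mul_mem (hK : Monotone K) (ht : ∀ i, t i ∈ K i.succ)
    (hc : ∀ i, c i ∈ K 0) (hsum : ∑ i, c i * t i ∈ K 0) (hne : ∃ i, c i ≠ 0) :
    ∃ j, t j ∈ K j.castSucc := by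
  classical
  obtain ⟨j, hj, hmax⟩ := (univ.filter (c · ≠ 0)).exists_max_image id
    (by simpa [Finset.Nonempty] using hne)
  have hcj : c j ≠ 0 := (mem_filter.1 hj).2
  have hzero : ∀ i, j < i → c i = 0 := fun i hji ↦
    by_contra fun hi ↦ (hmax i (by simpa using hi)).not_gt hji
  have hrest := sum_erase_mul_mem_castSucc hK ht hc hzero
  have hcjt : c j * t j ∈ K j.castSucc := by
    rw [← add_sub_cancel_right (c j * t j) (∑ i ∈ univ.erase j, c i * t i),
      add_sum_erase _ (fun i ↦ c i * t i) (mem_univ j)]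
    exact sub_mem (hK (zero_le _) hsum) hrest
  refine ⟨j, ?_⟩
  rw [← inv_mul_cancel_left₀ hcj (t j)]
  exact mul_mem (inv_mem (hK (zero_le _) (hc j))) hcjt

end Fin

theorem primitive_tower_derivatives_linearly_independent_general
    (F : Type*) [Field F]
    (δ : F → F)
    (hδadd : ∀ a b : F, δ (a + b) = δ a + δ b)
    (hδmul : ∀ a b : F, δ (a * b) = δ a * b + a * δ b)
    (n : ℕ) (t : Fin n → F) (K : Fin (n + 1) → Subfield F)
    (hadj : ∀ i : Fin n,
      K i.succ = Subfield.closure ((K i.castSucc : Set F) ∪ {t i}))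
    (htr : ∀ i : Fin n, Transcendental ↥(K i.castSucc) (t i))
    (hconst : ∀ i : Fin n, ∀ y ∈ K i.succ, δ y = 0 → y ∈ K i.castSucc) :
    ∀ c : Fin n → F, (∀ i, c i ∈ K 0 ∧ δ (c i) = 0) →
      (∑ i, c i * δ (t i)) = 0 → ∀ i, c i = 0 := by
  intro c hc hsum
  by_contra! hne
  have hK : Monotone K := Fin.monotone_iff_le_succ.2 fun i x hx ↦
    (hadj i).symm ▸ Subfield.subset_closure (Set.mem_union_left _ hx)
  have ht : ∀ i, t i ∈ K i.succ := fun i ↦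
    (hadj i).symm ▸ Subfield.subset_closure (Set.mem_union_right _ rfl)
  have hconst_sum : δ (∑ i, c i * t i) = 0 :=
    (map_sum_mul_of_map_eq_zero δ hδadd hδmul _ c t fun i _ ↦ (hc i).2).trans hsum
  have hsum_mem : ∑ i, c i * t i ∈ K 0 :=
    Fin.mem_zero_of_mem_of_forall_mem_castSucc K hconst hconst_sum (Fin.last n) <|
      sum_mem fun i _ ↦ mul_mem (hK (Fin.zero_le _) (hc i).1) (hK (Fin.le_last _) (ht i))
  obtain ⟨j, hj⟩ := Fin.exists_mem_castSucc_of_sum_mul_mem hK ht (fun i ↦ (hc i).1) hsum_mem hne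
  exact Subfield.notMem_of_transcendental (htr j) hj

/-- In a primitive tower `K₀ ⊂ K₁ ⊂ ⋯ ⊂ Kₙ` of differential fields of
characteristic zero, where `Kᵢ = Kᵢ₋₁(tᵢ)` with `tᵢ` transcendental over
`Kᵢ₋₁`, `tᵢ′ ∈ Kᵢ₋₁`, and constants do not grow, the derivatives
`t₁′, …, tₙ′` are linearly independent over the constant field. -/
theorem primitive_tower_derivatives_linearly_independent
    (F : Type*) [Field F] [CharZero F]
    (δ : F → F)
    (hδadd : ∀ a b : F, δ (a + b) = δ a + δ b)
    (hδmul : ∀ a b : F, δ (a * b) = δ a * b + a * δ b)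
    (n : ℕ) (t : Fin n → F) (K : Fin (n + 1) → Subfield F)
    (hclosed : ∀ i, ∀ a ∈ K i, δ a ∈ K i)
    (hadj : ∀ i : Fin n,
      K i.succ = Subfield.closure ((K i.castSucc : Set F) ∪ {t i}))
    (htr : ∀ i : Fin n, Transcendental ↥(K i.castSucc) (t i))
    (hder : ∀ i : Fin n, δ (t i) ∈ K i.castSucc)
    (hconst : ∀ i : Fin n, ∀ y ∈ K i.succ, δ y = 0 → y ∈ K i.castSucc) :
    ∀ c : Fin n → F, (∀ i, c i ∈ K 0 ∧ δ (c i) = 0) →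
      (∑ i, c i * δ (t i)) = 0 → ∀ i, c i = 0 :=
  primitive_tower_derivatives_linearly_independent_general F δ hδadd hδmul n t K hadj htr hconst
end
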